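/- For every integer k ≥ 3, the presented group ⟨ℓ, x₁, …, x_k ∣ [x_i, x_j] = 1 for all 1 ≤ i, j ≤ k, ℓ⁻¹x_iℓ = x_{i+1} for 1 ≤ i ≤ k−1, ℓ⁻¹x_kℓ = x₁⟩ is isomorphic to the presented group K_k = ⟨ℓ, x ∣ [x, ℓ^k] = 1, [x, ℓ⁻ⁱxℓⁱ] = 1 for i = 1, …, k−1⟩. -/

import Mathlib

/-!
In the first presentation the relations `ℓ⁻¹xᵢℓ = xᵢ₊₁` give `xᵢ = ℓ⁻ⁱx₀ℓⁱ`, so the group is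
generated by `ℓ` and `x = x₀`. The cyclic relation `ℓ⁻¹x_{k-1}ℓ = x₀` then says `[x, ℓᵏ] = 1`,
and `[xᵢ, xⱼ] = 1` for `i < j` is the conjugate by `ℓⁱ` of `[x, ℓ⁻ᵐxℓᵐ] = 1` with `m = j - i`.
So `ℓ ↦ ℓ, xᵢ ↦ ℓ⁻ⁱxℓⁱ` and `ℓ ↦ ℓ, x ↦ x₀` are well defined and mutually inverse.
-/

open scoped commutatorElement

/-- The relators of `⟨ℓ, x₁, …, x_k ∣ [xᵢ, x_j] = 1 (1 ≤ i, j ≤ k),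
ℓ⁻¹xᵢℓ = x_{i+1} (1 ≤ i ≤ k-1), ℓ⁻¹x_kℓ = x₁⟩`, with `ℓ = none` and the `xᵢ`
(0-indexed) the elements `some i`, `i : Fin k`. -/
def bigRels (k : ℕ) : Set (FreeGroup (Option (Fin k))) :=
  let l : FreeGroup (Option (Fin k)) := FreeGroup.of none
  let x : Fin k → FreeGroup (Option (Fin k)) := fun i => FreeGroup.of (some i)
  (Set.range fun p : Fin k × Fin k => ⁅x p.1, x p.2⁆) ∪
    (Set.range fun i : Fin k =>
      l⁻¹ * x i * l * (x ⟨((i : ℕ) + 1) % k, Nat.mod_lt _ i.pos⟩)⁻¹)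

/-- The relators of `K_k = ⟨ℓ, x ∣ [x, ℓ^k] = 1, [x, ℓ⁻ⁱxℓⁱ] = 1 (i = 1, …, k-1)⟩`,
with generators `ℓ = 0`, `x = 1`. -/
def KRels (k : ℕ) : Set (FreeGroup (Fin 2)) :=
  let l : FreeGroup (Fin 2) := FreeGroup.of 0
  let x : FreeGroup (Fin 2) := FreeGroup.of 1
  {⁅x, l ^ k⁆} ∪
    Set.range (fun i : Fin (k - 1) => ⁅x, (l ^ ((i : ℕ) + 1))⁻¹ * x * l ^ ((i : ℕ) + 1)⁆)

section Conjugation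

variable {G : Type*} [Group G]

theorem inv_pow_add_mul_mul_pow_add (l x : G) (m n : ℕ) :
    (l ^ (m + n))⁻¹ * x * l ^ (m + n) = (l ^ n)⁻¹ * ((l ^ m)⁻¹ * x * l ^ m) * l ^ n := by
  rw [pow_add]
  group

theorem commute_inv_pow_mul_mul_pow {l x : G} {k : ℕ}
    (h : ∀ m, 0 < m → m < k → Commute x ((l ^ m)⁻¹ * x * l ^ m)) {i j : ℕ}
    (hi : i < k) (hj : j < k) :
    Commute ((l ^ i)⁻¹ * x * l ^ i) ((l ^ j)⁻¹ * x * l ^ j) := by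
  wlog hij : i ≤ j generalizing i j
  · exact (this hj hi (le_of_not_ge hij)).symm
  obtain ⟨m, rfl⟩ := Nat.exists_eq_add_of_le' hij
  rcases m.eq_zero_or_pos with rfl | hm
  · rw [zero_add]
  rw [inv_pow_add_mul_mul_pow_add]
  simpa only [inv_inv] using (h m hm (by omega)).conj (l ^ i)⁻¹

theorem inv_mul_inv_pow_mul_mul_pow_mul (l x : G) (n : ℕ) :
    l⁻¹ * ((l ^ n)⁻¹ * x * l ^ n) * l = (l ^ (n + 1))⁻¹ * x * l ^ (n + 1) := by
  rw [pow_succ]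
  group

theorem commute_of_inv_mul_mul_eq {l x : G} (h : l⁻¹ * x * l = x) : Commute x l := by
  rw [commute_iff_eq]
  calc x * l = l * (l⁻¹ * x * l) := by group
    _ = l * x := by rw [h]

theorem inv_pow_mod_mul_mul_pow_mod {l x : G} {k : ℕ} (h : Commute x (l ^ k)) (n : ℕ) :
    (l ^ (n % k))⁻¹ * x * l ^ (n % k) = (l ^ n)⁻¹ * x * l ^ n := by
  conv_rhs => rw [← Nat.div_add_mod n k, inv_pow_add_mul_mul_pow_add, pow_mul,
    (h.pow_right _).symm.inv_mul_cancel]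

end Conjugation

theorem PresentedGroup.lift_of_eq_one {α : Type*} {rels : Set (FreeGroup α)} :
    ∀ r ∈ rels, FreeGroup.lift (PresentedGroup.of (rels := rels)) r = 1 := by
  intro r hr
  rw [show FreeGroup.lift PresentedGroup.of = PresentedGroup.mk rels from
    FreeGroup.ext_hom _ _ fun _ ↦ FreeGroup.lift_apply_of]
  exact PresentedGroup.one_of_mem hr

section Relations

variable {G : Type*} [Group G] {k : ℕ}

theorem bigRels_lift_eq_one_iff (f : Option (Fin k) → G) :
    (∀ r ∈ bigRels k, FreeGroup.lift f r = 1) ↔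
      (∀ i j, Commute (f (some i)) (f (some j))) ∧
        ∀ i : Fin k, (f none)⁻¹ * f (some i) * f none
          = f (some ⟨((i : ℕ) + 1) % k, Nat.mod_lt _ i.pos⟩) := by
  simp only [bigRels, Set.mem_union, or_imp, forall_and, Set.forall_mem_range,
    map_commutatorElement, commutatorElement_eq_one_iff_commute, map_mul, map_inv,
    FreeGroup.lift_apply_of, mul_inv_eq_one, Prod.forall]

theorem KRels_lift_eq_one_iff (f : Fin 2 → G) :
    (∀ r ∈ KRels k, FreeGroup.lift f r = 1) ↔
      Commute (f 1) (f 0 ^ k) ∧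
        ∀ m, 0 < m → m < k → Commute (f 1) ((f 0 ^ m)⁻¹ * f 1 * f 0 ^ m) := by
  simp only [KRels, Set.mem_union, or_imp, forall_and, Set.forall_mem_range,
    Set.mem_singleton_iff, forall_eq, map_commutatorElement, commutatorElement_eq_one_iff_commute,
    map_mul, map_inv, map_pow, FreeGroup.lift_apply_of]
  refine and_congr_right fun _ ↦ ⟨fun h m hm hmk ↦ ?_, fun h i ↦ h _ i.val.succ_pos (by omega)⟩
  obtain ⟨i, rfl⟩ := Nat.exists_eq_add_one_of_ne_zero hm.ne'
  exact h ⟨i, by omega⟩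

end Relations

namespace KRels

variable (k : ℕ)

def ℓ : PresentedGroup (KRels k) := .of 0

def x : PresentedGroup (KRels k) := .of 1

theorem hom_ext {G : Type*} [Group G] {f g : PresentedGroup (KRels k) →* G}
    (hℓ : f (ℓ k) = g (ℓ k)) (hx : f (x k) = g (x k)) : f = g :=
  PresentedGroup.ext fun i ↦ by fin_cases i; exacts [hℓ, hx]

theorem x_commute_ℓ_pow : Commute (x k) (ℓ k ^ k) :=
  ((KRels_lift_eq_one_iff _).mp PresentedGroup.lift_of_eq_one).1

theorem x_commute_inv_ℓ_pow_mul_x_mul_ℓ_pow :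
    ∀ m, 0 < m → m < k → Commute (x k) ((ℓ k ^ m)⁻¹ * x k * ℓ k ^ m) :=
  ((KRels_lift_eq_one_iff _).mp PresentedGroup.lift_of_eq_one).2

end KRels

namespace bigRels

variable (k : ℕ)

def ℓ : PresentedGroup (bigRels k) := .of none

variable {k}

def x (i : Fin k) : PresentedGroup (bigRels k) := .of (some i)

theorem hom_ext {G : Type*} [Group G] {f g : PresentedGroup (bigRels k) →* G}
    (hℓ : f (ℓ k) = g (ℓ k)) (hx : ∀ i, f (x i) = g (x i)) : f = g :=
  PresentedGroup.ext fun
    | none => hℓ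
    | some i => hx i

theorem x_commute (i j : Fin k) : Commute (x i) (x j) :=
  ((bigRels_lift_eq_one_iff _).mp PresentedGroup.lift_of_eq_one).1 i j

theorem inv_ℓ_mul_x_mul_ℓ (i : Fin k) :
    (ℓ k)⁻¹ * x i * ℓ k = x ⟨((i : ℕ) + 1) % k, Nat.mod_lt _ i.pos⟩ :=
  ((bigRels_lift_eq_one_iff _).mp PresentedGroup.lift_of_eq_one).2 i

variable [NeZero k]

theorem inv_ℓ_pow_mul_x_zero_mul_ℓ_pow (n : ℕ) :
    (ℓ k ^ n)⁻¹ * x 0 * ℓ k ^ n = x (Fin.ofNat k n) := by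
  induction n with
  | zero => simp
  | succ n ih =>
    rw [← inv_mul_inv_pow_mul_mul_pow_mul, ih, inv_ℓ_mul_x_mul_ℓ]
    exact congrArg x (Fin.ext (Nat.mod_add_mod n k 1))

theorem x_eq_inv_ℓ_pow_mul_x_zero_mul_ℓ_pow (i : Fin k) :
    x i = (ℓ k ^ (i : ℕ))⁻¹ * x 0 * ℓ k ^ (i : ℕ) := by
  rw [inv_ℓ_pow_mul_x_zero_mul_ℓ_pow, Fin.ofNat_val_eq_self]

theorem x_zero_commute_ℓ_pow : Commute (x 0) (ℓ k ^ k) :=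
  commute_of_inv_mul_mul_eq <| by rw [inv_ℓ_pow_mul_x_zero_mul_ℓ_pow, Fin.ofNat_self]

end bigRels

def bigRels.toKRels (k : ℕ) : PresentedGroup (bigRels k) →* PresentedGroup (KRels k) :=
  PresentedGroup.toGroup (f := fun o ↦ o.elim (KRels.ℓ k)
      fun i ↦ (KRels.ℓ k ^ (i : ℕ))⁻¹ * KRels.x k * KRels.ℓ k ^ (i : ℕ)) <|
    (bigRels_lift_eq_one_iff _).mpr
      ⟨fun i j ↦ commute_inv_pow_mul_mul_pow (KRels.x_commute_inv_ℓ_pow_mul_x_mul_ℓ_pow k)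
          i.isLt j.isLt,
        fun i ↦ by
          simp only [Option.elim_some, Option.elim_none]
          rw [inv_mul_inv_pow_mul_mul_pow_mul,
            inv_pow_mod_mul_mul_pow_mod (KRels.x_commute_ℓ_pow k)]⟩

def KRels.toBigRels (k : ℕ) [NeZero k] : PresentedGroup (KRels k) →* PresentedGroup (bigRels k) :=
  PresentedGroup.toGroup (f := ![bigRels.ℓ k, bigRels.x 0]) <|
    (KRels_lift_eq_one_iff _).mpr
      ⟨bigRels.x_zero_commute_ℓ_pow, fun m _ hm ↦ by
        have := bigRels.x_commute 0 ⟨m, hm⟩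
        rwa [bigRels.x_eq_inv_ℓ_pow_mul_x_zero_mul_ℓ_pow ⟨m, hm⟩] at this⟩

@[simp]
theorem bigRels.toKRels_ℓ (k : ℕ) : bigRels.toKRels k (bigRels.ℓ k) = KRels.ℓ k :=
  PresentedGroup.toGroup.of _

@[simp]
theorem bigRels.toKRels_x {k : ℕ} (i : Fin k) :
    bigRels.toKRels k (bigRels.x i) = (KRels.ℓ k ^ (i : ℕ))⁻¹ * KRels.x k * KRels.ℓ k ^ (i : ℕ) :=
  PresentedGroup.toGroup.of _

@[simp]
theorem KRels.toBigRels_ℓ (k : ℕ) [NeZero k] : KRels.toBigRels k (KRels.ℓ k) = bigRels.ℓ k :=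
  PresentedGroup.toGroup.of _

@[simp]
theorem KRels.toBigRels_x (k : ℕ) [NeZero k] : KRels.toBigRels k (KRels.x k) = bigRels.x 0 :=
  PresentedGroup.toGroup.of _

def bigRels.equivKRels (k : ℕ) [NeZero k] :
    PresentedGroup (bigRels k) ≃* PresentedGroup (KRels k) :=
  MonoidHom.toMulEquiv (bigRels.toKRels k) (KRels.toBigRels k)
    (bigRels.hom_ext (by simp) fun i ↦ by
      simp [← bigRels.x_eq_inv_ℓ_pow_mul_x_zero_mul_ℓ_pow i])
    (KRels.hom_ext _ (by simp) (by simp))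

/-- For `k ≥ 3`, `⟨ℓ, x₁, …, x_k ∣ [xᵢ, x_j] = 1,
ℓ⁻¹xᵢℓ = x_{i+1 mod k}⟩` is isomorphic to
`K_k = ⟨ℓ, x ∣ [x, ℓ^k] = 1, [x, ℓ⁻ⁱxℓⁱ] = 1 (i = 1, …, k-1)⟩`. -/
theorem big_presentation_iso_Kk (k : ℕ) (hk : 3 ≤ k) :
    Nonempty (PresentedGroup (bigRels k) ≃* PresentedGroup (KRels k)) :=
  have : NeZero k := ⟨by omega⟩
  ⟨bigRels.equivKRels k⟩
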